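/- arXiv:2510.09887 — 3 statements merged into one kernel-verified Lean document; each statement's English description precedes it below -/
import Mathlib

section
/- Let X be a type of prompts and Y a type of responses. Let π_θ, π_ref : X → Y → ℝ be conditional likelihoods with π_θ(y|x) > 0 and π_ref(y|x) > 0 for all x, y, let p : X → ℝ be a prompt marginal with p(x) > 0, and let q_θ, q_ref : Y → ℝ be response marginals with q_θ(y) > 0 and q_ref(y) > 0. Define the abductive policies π̃_θ(x|y) = π_θ(y|x)·p(x)/q_θ(y) and π̃_ref(x|y) = π_ref(y|x)·p(x)/q_ref(y). Then for every response y and every pair of prompts x_w, x_l, the difference of abductive log-likelihood ratios equals the difference of direct log-likelihood ratios: log(π̃_θ(x_w|y)/π̃_ref(x_w|y)) − log(π̃_θ(x_l|y)/π̃_ref(x_l|y)) = log(π_θ(y|x_w)/π_ref(y|x_w)) − log(π_θ(y|x_l)/π_ref(y|x_l)). In particular both the prompt marginal p and the response marginals q_θ, q_ref cancel from the difference. -/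
/-- The difference of abductive log-likelihood ratios equals the
difference of direct log-likelihood ratios; the prompt marginal `p` and the
response marginals `qθ`, `qref` cancel. -/
theorem abductive_log_ratio_diff_eq
    {X Y : Type*}
    (πθ πref : X → Y → ℝ) (p : X → ℝ) (qθ qref : Y → ℝ)
    (hπθ : ∀ x y, 0 < πθ x y) (hπref : ∀ x y, 0 < πref x y)
    (hp : ∀ x, 0 < p x) (hqθ : ∀ y, 0 < qθ y) (hqref : ∀ y, 0 < qref y)
    (πθ' πref' : Y → X → ℝ)
    (hπθ' : ∀ x y, πθ' y x = πθ x y * p x / qθ y)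
    (hπref' : ∀ x y, πref' y x = πref x y * p x / qref y) :
    ∀ (y : Y) (xw xl : X),
      Real.log (πθ' y xw / πref' y xw) - Real.log (πθ' y xl / πref' y xl)
        = Real.log (πθ xw y / πref xw y) - Real.log (πθ xl y / πref xl y) := by
  intro y xw xl
  have key : ∀ x : X, πθ' y x / πref' y x = (πθ x y / πref x y) * (qref y / qθ y) := by
    intro x
    rw [hπθ', hπref']
    field_simp [(hp x).ne', (hqθ y).ne', (hqref y).ne', (hπref x y).ne']
  rw [key xw, key xl]
  have hratio : ∀ x : X, (0:ℝ) < πθ x y / πref x y := fun x => div_pos (hπθ x y) (hπref x y)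
  have hq : (0:ℝ) < qref y / qθ y := div_pos (hqref y) (hqθ y)
  rw [Real.log_mul (ne_of_gt (hratio xw)) (ne_of_gt hq),
      Real.log_mul (ne_of_gt (hratio xl)) (ne_of_gt hq)]
  ring
end

section
/- Let X be a type of prompts and Y a type of responses. Let π_θ, π_ref : X → Y → ℝ be strictly positive conditional likelihoods, p : X → ℝ a strictly positive prompt marginal shared by both policies, and q_θ, q_ref : Y → ℝ strictly positive response marginals. Define π̃_θ(x|y) = π_θ(y|x)·p(x)/q_θ(y) and π̃_ref(x|y) = π_ref(y|x)·p(x)/q_ref(y), and let σ(t) = 1/(1 + exp(−t)) be the logistic sigmoid. Then for every β ∈ ℝ, every response y, and every pair of prompts (x_w, x_l), the pointwise A-DPO loss computed with abductive policies equals the pointwise loss computed by swapping the roles of prompts and responses in the standard DPO objective: −log σ( β·( log(π̃_θ(x_w|y)/π̃_ref(x_w|y)) − log(π̃_θ(x_l|y)/π̃_ref(x_l|y)) ) ) = −log σ( β·( log(π_θ(y|x_w)/π_ref(y|x_w)) − log(π_θ(y|x_l)/π_ref(y|x_l)) ) ). Consequently, for any finite distribution over triples (x_w, x_l, y), the expected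 A-DPO loss defined via abductive policies equals the expected loss defined via the direct conditional likelihoods with prompts and responses swapped. -/
/-- Proposition 1: the pointwise A-DPO loss computed with abductive
policies equals the pointwise loss computed by swapping the roles of prompts and
responses in the standard DPO objective; consequently expectations over any
finite distribution of triples agree. -/
theorem adpo_loss_eq_swapped_dpo_loss
    {X Y : Type*}
    (πθ πref : X → Y → ℝ) (p : X → ℝ) (qθ qref : Y → ℝ)
    (hπθ : ∀ x y, 0 < πθ x y) (hπref : ∀ x y, 0 < πref x y)
    (hp : ∀ x, 0 < p x) (hqθ : ∀ y, 0 < qθ y) (hqref : ∀ y, 0 < qref y)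
    (πθ' πref' : Y → X → ℝ)
    (hπθ' : ∀ x y, πθ' y x = πθ x y * p x / qθ y)
    (hπref' : ∀ x y, πref' y x = πref x y * p x / qref y)
    (σ : ℝ → ℝ) (hσ : ∀ t, σ t = 1 / (1 + Real.exp (-t))) :
    (∀ (β : ℝ) (y : Y) (xw xl : X),
      -Real.log (σ (β * (Real.log (πθ' y xw / πref' y xw)
            - Real.log (πθ' y xl / πref' y xl))))
        = -Real.log (σ (β * (Real.log (πθ xw y / πref xw y)
            - Real.log (πθ xl y / πref xl y)))))
    ∧
    (∀ (β : ℝ) (ι : Type) (s : Finset ι) (w : ι → ℝ)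
        (xw xl : ι → X) (y : ι → Y),
      ∑ i ∈ s, w i *
          (-Real.log (σ (β * (Real.log (πθ' (y i) (xw i) / πref' (y i) (xw i))
              - Real.log (πθ' (y i) (xl i) / πref' (y i) (xl i))))))
        = ∑ i ∈ s, w i *
          (-Real.log (σ (β * (Real.log (πθ (xw i) (y i) / πref (xw i) (y i))
              - Real.log (πθ (xl i) (y i) / πref (xl i) (y i))))))) := by
  have key : ∀ (β : ℝ) (y : Y) (xw xl : X),
      β * (Real.log (πθ' y xw / πref' y xw) - Real.log (πθ' y xl / πref' y xl))
        = β * (Real.log (πθ xw y / πref xw y) - Real.log (πθ xl y / πref xl y)) := by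
    intro β y xw xl
    have hratio : ∀ x : X, πθ' y x / πref' y x
        = (πθ x y / πref x y) * (qref y / qθ y) := by
      intro x
      have h1 := (hπθ x y).ne'
      have h2 := (hπref x y).ne'
      have h3 := (hp x).ne'
      have h4 := (hqθ y).ne'
      have h5 := (hqref y).ne'
      rw [hπθ', hπref']
      field_simp
    have hlog : ∀ x : X, Real.log (πθ' y x / πref' y x)
        = Real.log (πθ x y / πref x y) + Real.log (qref y / qθ y) := by
      intro x
      rw [hratio x, Real.log_mul (div_pos (hπθ x y) (hπref x y)).ne'
        (div_pos (hqref y) (hqθ y)).ne']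
    rw [hlog xw, hlog xl]
    ring
  constructor
  · intro β y xw xl
    rw [key]
  · intro β ι s w xw xl y
    refine Finset.sum_congr rfl fun i _ => ?_
    rw [key]
end

section
/- Let G : ℝ → ℝ be any function, and define a generalized preference loss on a score function ψ by F(s, t) := G(s − t). Let π_θ, π_ref : X → Y → ℝ be strictly positive conditional likelihoods, p : X → ℝ a strictly positive prompt marginal shared by both policies, q_θ, q_ref : Y → ℝ strictly positive response marginals, and define the abductive policies π̃_θ(x|y) = π_θ(y|x)·p(x)/q_θ(y), π̃_ref(x|y) = π_ref(y|x)·p(x)/q_ref(y). With ψ(x, y) := log π_θ(y|x) − log π_ref(y|x) and ψ̃(x, y) := log π̃_θ(x|y) − log π̃_ref(x|y), for every response y and every pair of prompts (x_w, x_l) it holds that F(ψ̃(x_w, y), ψ̃(x_l, y)) = F(ψ(x_w, y), ψ(x_l, y)). Hence any abductive preference loss whose comparison function depends only on the score difference can be computed directly from the forward conditional likelihoods with prompts and responses swapped, without access to the abductive policies. -/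
/-- for any comparison function `F(s, t) := G(s − t)` depending only
on the score difference, the abductive preference loss equals the loss computed
from the forward conditional likelihoods with prompts and responses swapped. -/
theorem abductive_general_preference_loss_eq
    {X Y : Type*}
    (G : ℝ → ℝ) (F : ℝ → ℝ → ℝ) (hF : ∀ s t, F s t = G (s - t))
    (πθ πref : X → Y → ℝ) (p : X → ℝ) (qθ qref : Y → ℝ)
    (hπθ : ∀ x y, 0 < πθ x y) (hπref : ∀ x y, 0 < πref x y)
    (hp : ∀ x, 0 < p x) (hqθ : ∀ y, 0 < qθ y) (hqref : ∀ y, 0 < qref y)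
    (πθ' πref' : Y → X → ℝ)
    (hπθ' : ∀ x y, πθ' y x = πθ x y * p x / qθ y)
    (hπref' : ∀ x y, πref' y x = πref x y * p x / qref y)
    (ψ : X → Y → ℝ)
    (hψ : ∀ x y, ψ x y = Real.log (πθ x y) - Real.log (πref x y))
    (ψ' : X → Y → ℝ)
    (hψ' : ∀ x y, ψ' x y = Real.log (πθ' y x) - Real.log (πref' y x)) :
    ∀ (y : Y) (xw xl : X),
      F (ψ' xw y) (ψ' xl y) = F (ψ xw y) (ψ xl y) := by
  intro y xw xl
  rw [hF, hF]
  congr 1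
  have e : ∀ x : X, ψ' x y = ψ x y + Real.log (qref y) - Real.log (qθ y) := by
    intro x
    rw [hψ', hψ, hπθ', hπref',
      Real.log_div (ne_of_gt (mul_pos (hπθ x y) (hp x))) (ne_of_gt (hqθ y)),
      Real.log_div (ne_of_gt (mul_pos (hπref x y) (hp x))) (ne_of_gt (hqref y)),
      Real.log_mul (ne_of_gt (hπθ x y)) (ne_of_gt (hp x)),
      Real.log_mul (ne_of_gt (hπref x y)) (ne_of_gt (hp x))]
    ring
  rw [e xw, e xl]
  ring
end
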